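/- arXiv:1109.4898 — 2 statements merged into one kernel-verified Lean document; each statement's English description precedes it below -/
import Mathlib

section
/- Let 𝕂 be ℝ or ℂ, let 0 < p_1, …, p_n ≤ q ≤ s < ∞ with s ≥ 1, and let E_1, …, E_n, F, G be Banach spaces over 𝕂. If A : E_1 × ⋯ × E_n → F is a continuous n-linear operator that is multiple (s,q;p_1,…,p_n)-mixing summing and u : F → G is an absolutely s-summing linear operator, then u ∘ A is multiple (q;p_1,…,p_n)-summing and ‖u ∘ A‖_{mas(q;p_1,…,p_n)} ≤ π_s(u) · ‖A‖_{mx(s,q;p_1,…,p_n)}. -/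
open scoped BigOperators
noncomputable section

/-- The weak `ℓ^q` norm of a finite family in a normed space:
`sup_{‖φ‖ ≤ 1} (∑_j |φ(x_j)|^q)^{1/q}`. -/
def weakLpNorm (𝕂 : Type*) [RCLike 𝕂] {E : Type*} [NormedAddCommGroup E] [NormedSpace 𝕂 E]
    {J : Type*} [Fintype J] (q : ℝ) (x : J → E) : ℝ :=
  ⨆ φ : {φ : E →L[𝕂] 𝕂 // ‖φ‖ ≤ 1}, (∑ j, ‖φ.1 (x j)‖ ^ q) ^ (1 / q)

/-- `T` is multiple `(p;p₁,…,pₙ)`-summing. -/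
def MultipleSumming (𝕂 : Type*) [RCLike 𝕂] {n : ℕ} {E : Fin n → Type*}
    [∀ i, NormedAddCommGroup (E i)] [∀ i, NormedSpace 𝕂 (E i)]
    {G : Type*} [NormedAddCommGroup G] [NormedSpace 𝕂 G]
    (p : ℝ) (q : Fin n → ℝ) (T : ((i : Fin n) → E i) → G) : Prop :=
  ∃ C : ℝ, 0 ≤ C ∧ ∀ (m : ℕ) (x : (i : Fin n) → Fin m → E i),
    (∑ j : Fin n → Fin m, ‖T (fun i => x i (j i))‖ ^ p) ^ (1 / p) ≤
      C * ∏ i, weakLpNorm 𝕂 (q i) (x i)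

/-- The multiple `(p;p₁,…,pₙ)`-summing norm of `T`: the infimum of the admissible
constants. -/
def masNorm (𝕂 : Type*) [RCLike 𝕂] {n : ℕ} {E : Fin n → Type*}
    [∀ i, NormedAddCommGroup (E i)] [∀ i, NormedSpace 𝕂 (E i)]
    {G : Type*} [NormedAddCommGroup G] [NormedSpace 𝕂 G]
    (p : ℝ) (q : Fin n → ℝ) (T : ((i : Fin n) → E i) → G) : ℝ :=
  sInf { C : ℝ | 0 ≤ C ∧ ∀ (m : ℕ) (x : (i : Fin n) → Fin m → E i),
    (∑ j : Fin n → Fin m, ‖T (fun i => x i (j i))‖ ^ p) ^ (1 / p) ≤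
      C * ∏ i, weakLpNorm 𝕂 (q i) (x i) }

/-- `u` is an absolutely `r`-summing linear operator. -/
def AbsolutelySummingOp (𝕂 : Type*) [RCLike 𝕂] {F G : Type*}
    [NormedAddCommGroup F] [NormedSpace 𝕂 F] [NormedAddCommGroup G] [NormedSpace 𝕂 G]
    (r : ℝ) (u : F →L[𝕂] G) : Prop :=
  ∃ C : ℝ, 0 ≤ C ∧ ∀ (k : ℕ) (y : Fin k → F),
    (∑ j : Fin k, ‖u (y j)‖ ^ r) ^ (1 / r) ≤ C * weakLpNorm 𝕂 r y

/-- The absolutely `r`-summing norm `π_r(u)`. -/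
def piNorm (𝕂 : Type*) [RCLike 𝕂] {F G : Type*}
    [NormedAddCommGroup F] [NormedSpace 𝕂 F] [NormedAddCommGroup G] [NormedSpace 𝕂 G]
    (r : ℝ) (u : F →L[𝕂] G) : ℝ :=
  sInf { C : ℝ | 0 ≤ C ∧ ∀ (k : ℕ) (y : Fin k → F),
    (∑ j : Fin k, ‖u (y j)‖ ^ r) ^ (1 / r) ≤ C * weakLpNorm 𝕂 r y }

/-- The mixed `(s,q)`-norm of a finite family `z` in `F`:
`inf ‖(τ_j)‖_{ℓ^ρ} ‖(y_j)‖_{w,s}` over factorizations `z_j = τ_j • y_j`, where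
`1/ρ = 1/q - 1/s` (so `ρ = ∞`, i.e. the sup norm, when `s = q`). -/
def mixedNorm (𝕂 : Type*) [RCLike 𝕂] {F : Type*} [NormedAddCommGroup F] [NormedSpace 𝕂 F]
    {J : Type*} [Fintype J] (s q : ℝ) (z : J → F) : ℝ :=
  sInf { c : ℝ | ∃ τ : J → 𝕂, ∃ y : J → F, (∀ j, z j = τ j • y j) ∧
      c = (if s = q then ⨆ j, ‖τ j‖
           else (∑ j, ‖τ j‖ ^ (1 / q - 1 / s)⁻¹) ^ (1 / q - 1 / s)) * weakLpNorm 𝕂 s y }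

/-- `A` is multiple `(s,q;p₁,…,pₙ)`-mixing summing. -/
def MultipleMixingSumming (𝕂 : Type*) [RCLike 𝕂] {n : ℕ} {E : Fin n → Type*}
    [∀ i, NormedAddCommGroup (E i)] [∀ i, NormedSpace 𝕂 (E i)]
    {F : Type*} [NormedAddCommGroup F] [NormedSpace 𝕂 F]
    (s q : ℝ) (p : Fin n → ℝ) (A : ((i : Fin n) → E i) → F) : Prop :=
  ∃ σ : ℝ, 0 ≤ σ ∧ ∀ (m : ℕ) (x : (i : Fin n) → Fin m → E i),
    mixedNorm 𝕂 s q (fun j : Fin n → Fin m => A (fun i => x i (j i))) ≤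
      σ * ∏ i, weakLpNorm 𝕂 (p i) (x i)

/-- The multiple `(s,q;p₁,…,pₙ)`-mixing summing norm of `A`. -/
def mixingNorm (𝕂 : Type*) [RCLike 𝕂] {n : ℕ} {E : Fin n → Type*}
    [∀ i, NormedAddCommGroup (E i)] [∀ i, NormedSpace 𝕂 (E i)]
    {F : Type*} [NormedAddCommGroup F] [NormedSpace 𝕂 F]
    (s q : ℝ) (p : Fin n → ℝ) (A : ((i : Fin n) → E i) → F) : ℝ :=
  sInf { σ : ℝ | 0 ≤ σ ∧ ∀ (m : ℕ) (x : (i : Fin n) → Fin m → E i),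
    mixedNorm 𝕂 s q (fun j : Fin n → Fin m => A (fun i => x i (j i))) ≤
      σ * ∏ i, weakLpNorm 𝕂 (p i) (x i) }

/-! For any factorization `A(x_j) = τ_j • y_j`, Hölder's inequality with `1/q = 1/ρ + 1/s`
gives `‖(u(A x_j))_j‖_q ≤ ‖τ‖_ρ ‖(u y_j)_j‖_s ≤ π_s(u) ‖τ‖_ρ ‖(y_j)_j‖_{w,s}`. Taking the infimum
over factorizations bounds the left side by `π_s(u)` times the mixed norm of `(A(x_j))_j`, which the
mixing hypothesis controls by `‖A‖_{mx} ∏ ‖x^{(k)}‖_{w,p_k}`. -/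

open Finset

section RealInf

lemma le_mul_csInf {S : Set ℝ} {a M : ℝ} (ha : 0 ≤ a) (hS : S.Nonempty)
    (h : ∀ c ∈ S, M ≤ a * c) : M ≤ a * sInf S := by
  rw [← smul_eq_mul, ← Real.sInf_smul_of_nonneg ha]
  exact le_csInf (hS.smul_set) (by rintro _ ⟨c, hc, rfl⟩; exact h c hc)

lemma le_csInf_mul_csInf {S T : Set ℝ} {M : ℝ} (hS : S.Nonempty) (hT : T.Nonempty)
    (hS₀ : ∀ c ∈ S, 0 ≤ c) (hT₀ : ∀ d ∈ T, 0 ≤ d) (h : ∀ c ∈ S, ∀ d ∈ T, M ≤ c * d) :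
    M ≤ sInf S * sInf T :=
  le_mul_csInf (Real.sInf_nonneg hS₀) hT fun d hd =>
    mul_comm d (sInf S) ▸ le_mul_csInf (hT₀ d hd) hS fun c hc => mul_comm c d ▸ h c hc d hd

end RealInf

section Holder

variable {J : Type*} [Fintype J]

def mixedWeightNorm (s q : ℝ) (a : J → ℝ) : ℝ :=
  if s = q then ⨆ j, a j else (∑ j, a j ^ (1 / q - 1 / s)⁻¹) ^ (1 / q - 1 / s)

lemma mixedWeightNorm_nonneg (s q : ℝ) {a : J → ℝ} (ha : ∀ j, 0 ≤ a j) :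
    0 ≤ mixedWeightNorm s q a := by
  unfold mixedWeightNorm
  split
  · exact Real.iSup_nonneg ha
  · exact Real.rpow_nonneg (sum_nonneg fun j _ => Real.rpow_nonneg (ha j) _) _

lemma sum_mul_rpow_le_iSup_mul {s : ℝ} (hs : 0 < s) {a b : J → ℝ} (ha : ∀ j, 0 ≤ a j)
    (hb : ∀ j, 0 ≤ b j) :
    (∑ j, (a j * b j) ^ s) ^ (1 / s) ≤ (⨆ j, a j) * (∑ j, b j ^ s) ^ (1 / s) := by
  set M := ⨆ j, a j
  have hM : 0 ≤ M := Real.iSup_nonneg ha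
  have hB : 0 ≤ ∑ j, b j ^ s := sum_nonneg fun j _ => Real.rpow_nonneg (hb j) _
  calc (∑ j, (a j * b j) ^ s) ^ (1 / s)
      ≤ (∑ j, M ^ s * b j ^ s) ^ (1 / s) := by
        refine Real.rpow_le_rpow (sum_nonneg fun j _ => ?_) (sum_le_sum fun j _ => ?_) (by positivity)
        · exact Real.rpow_nonneg (mul_nonneg (ha j) (hb j)) _
        · rw [← Real.mul_rpow hM (hb j)]
          exact Real.rpow_le_rpow (mul_nonneg (ha j) (hb j))
            (mul_le_mul_of_nonneg_right (le_ciSup (Set.finite_range a).bddAbove j) (hb j)) hs.le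
    _ = M * (∑ j, b j ^ s) ^ (1 / s) := by
        rw [← mul_sum, Real.mul_rpow (Real.rpow_nonneg hM _) hB, one_div,
          Real.rpow_rpow_inv hM hs.ne']

lemma sum_mul_rpow_le_of_lt {s q : ℝ} (hq : 0 < q) (hqs : q < s) {a b : J → ℝ}
    (ha : ∀ j, 0 ≤ a j) (hb : ∀ j, 0 ≤ b j) :
    (∑ j, (a j * b j) ^ q) ^ (1 / q) ≤
      (∑ j, a j ^ (1 / q - 1 / s)⁻¹) ^ (1 / q - 1 / s) * (∑ j, b j ^ s) ^ (1 / s) := by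
  set t := 1 / q - 1 / s
  have hs : 0 < s := hq.trans hqs
  have ht : 0 < t := sub_pos.mpr (one_div_lt_one_div_of_lt hq hqs)
  have hTriple : Real.HolderTriple t⁻¹ s q :=
    ⟨by simp only [t, inv_inv, one_div]; ring, inv_pos.mpr ht, hs⟩
  have hA : 0 ≤ ∑ j, a j ^ t⁻¹ := sum_nonneg fun j _ => Real.rpow_nonneg (ha j) _
  have hB : 0 ≤ ∑ j, b j ^ s := sum_nonneg fun j _ => Real.rpow_nonneg (hb j) _
  calc (∑ j, (a j * b j) ^ q) ^ (1 / q)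
      ≤ ((∑ j, a j ^ t⁻¹) ^ (q / t⁻¹) * (∑ j, b j ^ s) ^ (q / s)) ^ (1 / q) := by
        gcongr
        · exact sum_nonneg fun j _ => Real.rpow_nonneg (mul_nonneg (ha j) (hb j)) _
        · exact Real.Lr_rpow_le_Lp_mul_Lq_of_nonneg _ hTriple (fun j _ => ha j) fun j _ => hb j
    _ = (∑ j, a j ^ t⁻¹) ^ t * (∑ j, b j ^ s) ^ (1 / s) := by
        rw [Real.mul_rpow (Real.rpow_nonneg hA _) (Real.rpow_nonneg hB _), ← Real.rpow_mul hA,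
          ← Real.rpow_mul hB]
        congr 2 <;> field_simp

lemma sum_mul_rpow_le_mixedWeightNorm_mul {s q : ℝ} (hq : 0 < q) (hqs : q ≤ s) {a b : J → ℝ}
    (ha : ∀ j, 0 ≤ a j) (hb : ∀ j, 0 ≤ b j) :
    (∑ j, (a j * b j) ^ q) ^ (1 / q) ≤ mixedWeightNorm s q a * (∑ j, b j ^ s) ^ (1 / s) := by
  unfold mixedWeightNorm
  split
  · subst s
    exact sum_mul_rpow_le_iSup_mul hq ha hb
  · exact sum_mul_rpow_le_of_lt hq (lt_of_le_of_ne hqs (Ne.symm ‹_›)) ha hb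

end Holder

section Summing

variable {𝕂 : Type*} [RCLike 𝕂] {F G : Type*} [NormedAddCommGroup F] [NormedSpace 𝕂 F]
  [NormedAddCommGroup G] [NormedSpace 𝕂 G]

lemma weakLpNorm_comp_equiv {J J' : Type*} [Fintype J] [Fintype J'] (r : ℝ) (y : J → F)
    (e : J' ≃ J) : weakLpNorm 𝕂 r (y ∘ e) = weakLpNorm 𝕂 r y := by
  unfold weakLpNorm
  congr! 3 with φ
  exact e.sum_comp fun j => ‖φ.1 (y j)‖ ^ r

variable (𝕂) in
def SummingBound (r : ℝ) (u : F →L[𝕂] G) (C : ℝ) : Prop :=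
  ∀ (k : ℕ) (y : Fin k → F), (∑ j : Fin k, ‖u (y j)‖ ^ r) ^ (1 / r) ≤ C * weakLpNorm 𝕂 r y

lemma SummingBound.fintype {r C : ℝ} {u : F →L[𝕂] G} (h : SummingBound 𝕂 r u C)
    {J : Type*} [Fintype J] (y : J → F) :
    (∑ j, ‖u (y j)‖ ^ r) ^ (1 / r) ≤ C * weakLpNorm 𝕂 r y := by
  let e := (Fintype.equivFin J).symm
  simpa only [weakLpNorm_comp_equiv, Function.comp_apply, e.sum_comp fun j => ‖u (y j)‖ ^ r]
    using h _ (y ∘ e)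

lemma SummingBound.sum_rpow_le_mul_mixedNorm {s q C : ℝ} {u : F →L[𝕂] G}
    (h : SummingBound 𝕂 s u C) (hC : 0 ≤ C) (hq : 0 < q) (hqs : q ≤ s)
    {J : Type*} [Fintype J] (z : J → F) :
    (∑ j, ‖u (z j)‖ ^ q) ^ (1 / q) ≤ C * mixedNorm 𝕂 s q z := by
  refine le_mul_csInf hC ⟨_, fun _ => 1, z, fun j => (one_smul 𝕂 (z j)).symm, rfl⟩ ?_
  rintro _ ⟨τ, y, hz, rfl⟩
  obtain rfl : z = fun j => τ j • y j := funext hz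
  calc (∑ j, ‖u (τ j • y j)‖ ^ q) ^ (1 / q)
      = (∑ j, (‖τ j‖ * ‖u (y j)‖) ^ q) ^ (1 / q) := by simp only [map_smul, norm_smul]
    _ ≤ mixedWeightNorm s q (‖τ ·‖) * (∑ j, ‖u (y j)‖ ^ s) ^ (1 / s) :=
        sum_mul_rpow_le_mixedWeightNorm_mul hq hqs (fun j => norm_nonneg _) fun j => norm_nonneg _
    _ ≤ mixedWeightNorm s q (‖τ ·‖) * (C * weakLpNorm 𝕂 s y) :=
        mul_le_mul_of_nonneg_left (h.fintype y) (mixedWeightNorm_nonneg s q fun j => norm_nonneg _)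
    _ = C * (mixedWeightNorm s q (‖τ ·‖) * weakLpNorm 𝕂 s y) := mul_left_comm _ _ _

end Summing

section Multiple

variable {𝕂 : Type*} [RCLike 𝕂] {n : ℕ} {E : Fin n → Type*}
  [∀ i, NormedAddCommGroup (E i)] [∀ i, NormedSpace 𝕂 (E i)]
  {F G : Type*} [NormedAddCommGroup F] [NormedSpace 𝕂 F] [NormedAddCommGroup G] [NormedSpace 𝕂 G]

variable (𝕂) in
def MultipleSummingBound (q : ℝ) (p : Fin n → ℝ) (T : ((i : Fin n) → E i) → G) (C : ℝ) :
    Prop :=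
  ∀ (m : ℕ) (x : (i : Fin n) → Fin m → E i),
    (∑ j : Fin n → Fin m, ‖T (fun i => x i (j i))‖ ^ q) ^ (1 / q) ≤
      C * ∏ i, weakLpNorm 𝕂 (p i) (x i)

variable (𝕂) in
def MixingBound (s q : ℝ) (p : Fin n → ℝ) (A : ((i : Fin n) → E i) → F) (σ : ℝ) : Prop :=
  ∀ (m : ℕ) (x : (i : Fin n) → Fin m → E i),
    mixedNorm 𝕂 s q (fun j : Fin n → Fin m => A (fun i => x i (j i))) ≤
      σ * ∏ i, weakLpNorm 𝕂 (p i) (x i)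

lemma MixingBound.comp {s q C σ : ℝ} {p : Fin n → ℝ} {A : ((i : Fin n) → E i) → F}
    {u : F →L[𝕂] G} (hA : MixingBound 𝕂 s q p A σ) (hu : SummingBound 𝕂 s u C) (hC : 0 ≤ C)
    (hq : 0 < q) (hqs : q ≤ s) : MultipleSummingBound 𝕂 q p (fun x => u (A x)) (C * σ) :=
  fun m x => calc
    _ ≤ C * mixedNorm 𝕂 s q (fun j : Fin n → Fin m => A (fun i => x i (j i))) :=
        hu.sum_rpow_le_mul_mixedNorm hC hq hqs _
    _ ≤ C * (σ * ∏ i, weakLpNorm 𝕂 (p i) (x i)) := mul_le_mul_of_nonneg_left (hA m x) hC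
    _ = C * σ * ∏ i, weakLpNorm 𝕂 (p i) (x i) := (mul_assoc _ _ _).symm

end Multiple

theorem comp_multipleSumming_of_mixing_general
    {𝕂 : Type*} [RCLike 𝕂] {n : ℕ} (hn : 1 ≤ n)
    (s q : ℝ) (p : Fin n → ℝ) (hp : ∀ k, 0 < p k) (hpq : ∀ k, p k ≤ q) (hqs : q ≤ s)
    (E : Fin n → Type*) [∀ i, NormedAddCommGroup (E i)] [∀ i, NormedSpace 𝕂 (E i)]
    (F : Type*) [NormedAddCommGroup F] [NormedSpace 𝕂 F]
    (G : Type*) [NormedAddCommGroup G] [NormedSpace 𝕂 G]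
    (A : ContinuousMultilinearMap 𝕂 E F)
    (hA : MultipleMixingSumming 𝕂 s q p (⇑A))
    (u : F →L[𝕂] G) (hu : AbsolutelySummingOp 𝕂 s u) :
    MultipleSumming 𝕂 q p (fun x => u (A x)) ∧
      masNorm 𝕂 q p (fun x => u (A x)) ≤ piNorm 𝕂 s u * mixingNorm 𝕂 s q p (⇑A) := by
  have hq : 0 < q := (hp ⟨0, hn⟩).trans_le (hpq ⟨0, hn⟩)
  obtain ⟨C, hC₀, hC⟩ := hu
  obtain ⟨σ, hσ₀, hσ⟩ := hA
  refine ⟨⟨C * σ, mul_nonneg hC₀ hσ₀, MixingBound.comp hσ hC hC₀ hq hqs⟩, ?_⟩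
  refine le_csInf_mul_csInf ⟨C, hC₀, hC⟩ ⟨σ, hσ₀, hσ⟩ (fun _ h => h.1) (fun _ h => h.1) ?_
  rintro c ⟨hc₀, hc⟩ d ⟨hd₀, hd⟩
  exact csInf_le ⟨0, fun _ h => h.1⟩ ⟨mul_nonneg hc₀ hd₀, MixingBound.comp hd hc hc₀ hq hqs⟩

/-- Proposition `pp99`: if `A` is multiple `(s,q;p₁,…,pₙ)`-mixing summing
and `u` is absolutely `s`-summing, then `u ∘ A` is multiple `(q;p₁,…,pₙ)`-summing with
`‖u ∘ A‖ ≤ π_s(u) · ‖A‖_{mx}`. -/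
theorem comp_multipleSumming_of_mixing
    {𝕂 : Type*} [RCLike 𝕂] {n : ℕ} (hn : 1 ≤ n)
    (s q : ℝ) (p : Fin n → ℝ) (hp : ∀ k, 0 < p k) (hpq : ∀ k, p k ≤ q) (hqs : q ≤ s)
    (hs : 1 ≤ s)
    (E : Fin n → Type*) [∀ i, NormedAddCommGroup (E i)] [∀ i, NormedSpace 𝕂 (E i)]
    [∀ i, CompleteSpace (E i)]
    (F : Type*) [NormedAddCommGroup F] [NormedSpace 𝕂 F] [CompleteSpace F]
    (G : Type*) [NormedAddCommGroup G] [NormedSpace 𝕂 G] [CompleteSpace G]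
    (A : ContinuousMultilinearMap 𝕂 E F)
    (hA : MultipleMixingSumming 𝕂 s q p (⇑A))
    (u : F →L[𝕂] G) (hu : AbsolutelySummingOp 𝕂 s u) :
    MultipleSumming 𝕂 q p (fun x => u (A x)) ∧
      masNorm 𝕂 q p (fun x => u (A x)) ≤ piNorm 𝕂 s u * mixingNorm 𝕂 s q p (⇑A) :=
  comp_multipleSumming_of_mixing_general hn s q p hp hpq hqs E F G A hA u hu
end
end

section
/- Let 𝕂 be ℝ or ℂ, let 0 < p_1, …, p_n ≤ q ≤ s < ∞, and let E_1, …, E_n, F be Banach spaces over 𝕂 with each E_i ≠ {0}. Suppose that every continuous n-linear operator from E_1 × ⋯ × E_n to F is multiple (s,q;p_1,…,p_n)-mixing summing. Then for every 1 ≤ j < n and every choice of indices k_1 < ⋯ < k_j in {1,…,n}, every continuous j-linear operator from E_{k_1} × ⋯ × E_{k_j} to F is multiple (s,q;p_{k_1},…,p_{k_j})-mixing summing. -/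
open scoped BigOperators
noncomputable section

/-!
Pad a `j`-linear `S` on the coordinates `k` to the `n`-linear map
`T x = (∏_{b ∉ range k} φ b (x b)) • S (x ∘ k)`, where `φ b (a b) = 1`. Feed `T` the families
`x i` on the coordinates `k i` and `(a b, 0, …, 0)` on the others: on the multi-indices that vanish
off `range k` the `T`-family is the `S`-family, restricting a family along an injection does not
increase its mixed norm, and the padding families have weak norm at most `‖a b‖`. So the
inequality for `T` yields the one for `S`.
-/

open Finset Function

lemma Finset.prod_comp_mul_prod_compl_image {ι κ α : Type*} [Fintype ι] [Fintype κ]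
    [DecidableEq κ] [CommMonoid α] {k : ι → κ} (hk : Injective k) (g : κ → α) :
    (∏ i, g (k i)) * ∏ b ∈ (univ.image k)ᶜ, g b = ∏ b, g b := by
  rw [← prod_image hk.injOn, prod_mul_prod_compl]

lemma Finset.sum_comp_le_sum_of_injective {ι κ : Type*} [Fintype ι] [Fintype κ] {k : ι → κ}
    (hk : Injective k) (g : κ → ℝ) (hg : ∀ b, 0 ≤ g b) : ∑ i, g (k i) ≤ ∑ b, g b := by
  classical
  rw [← sum_image hk.injOn]
  exact sum_le_univ_sum_of_nonneg hg

lemma Finset.prod_compl_image_update {ι κ α : Type*} [Fintype ι] [Fintype κ] [DecidableEq κ]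
    [CommMonoid α] {β : κ → Type*} {k : ι → κ} (P : ∀ b, β b → α) (x : ∀ b, β b) (i : ι)
    (u : β (k i)) :
    ∏ b ∈ (univ.image k)ᶜ, P b (update x (k i) u b) = ∏ b ∈ (univ.image k)ᶜ, P b (x b) :=
  prod_congr rfl fun b hb => by rw [update_of_ne (by rintro rfl; simp at hb)]

namespace Function

variable {ι κ : Type*} {β : κ → Type*} {k : ι → κ}

open Classical in
def extendDep (k : ι → κ) (x : ∀ i, β (k i)) (y : ∀ b, β b) (b : κ) : β b :=
  if h : ∃ i, k i = b then h.choose_spec ▸ x h.choose else y b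

lemma Injective.extendDep_apply (hk : Injective k) (x : ∀ i, β (k i)) (y : ∀ b, β b) (i : ι) :
    extendDep k x y (k i) = x i := by
  have key : ∀ c (hc : k c = k i), hc ▸ x c = x i := by
    intro c hc
    obtain rfl := hk hc
    rfl
  classical
  rw [extendDep, dif_pos ⟨i, rfl⟩]
  exact key _ _

lemma extendDep_apply' (x : ∀ i, β (k i)) (y : ∀ b, β b) {b : κ} (hb : ¬∃ i, k i = b) :
    extendDep k x y b = y b := by
  classical
  rw [extendDep, dif_neg hb]

end Function

section Extend

variable {R ι κ : Type*} [CommSemiring R] [Fintype ι] [Fintype κ] [DecidableEq κ]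
  {M : κ → Type*} [∀ b, AddCommMonoid (M b)] [∀ b, Module R (M b)]
  {N : Type*} [AddCommMonoid N] [Module R N] {k : ι → κ}

def MultilinearMap.extend (f : MultilinearMap R (fun i => M (k i)) N) (hk : Injective k)
    (φ : ∀ b, M b →ₗ[R] R) : MultilinearMap R M N :=
  mk' (fun x => (∏ b ∈ (univ.image k)ᶜ, φ b (x b)) • f (fun i => x (k i)))
    (fun x b u v => by
      classical
      by_cases hb : b ∈ (univ.image k)ᶜ
      · have hb' : ∀ i, k i ≠ b := by rintro i rfl; simp at hb
        simp only [update_comp_eq_of_forall_ne' x _ hb', apply_update (fun b => φ b),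
          prod_update_of_mem hb, map_add, add_mul, add_smul]
      · obtain ⟨i, -, rfl⟩ := by simpa using hb
        simp only [prod_compl_image_update, update_comp_eq_of_injective' x hk,
          f.map_update_add, smul_add])
    (fun x b c u => by
      classical
      by_cases hb : b ∈ (univ.image k)ᶜ
      · have hb' : ∀ i, k i ≠ b := by rintro i rfl; simp at hb
        simp only [update_comp_eq_of_forall_ne' x _ hb', apply_update (fun b => φ b),
          prod_update_of_mem hb, map_smul, smul_eq_mul, mul_assoc, mul_smul]
      · obtain ⟨i, -, rfl⟩ := by simpa using hb
        simp only [prod_compl_image_update, update_comp_eq_of_injective' x hk,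
          f.map_update_smul, smul_comm c])

variable [TopologicalSpace R] [ContinuousMul R] [∀ b, TopologicalSpace (M b)]
  [TopologicalSpace N] [ContinuousSMul R N]

def ContinuousMultilinearMap.extend (f : ContinuousMultilinearMap R (fun i => M (k i)) N)
    (hk : Injective k) (φ : ∀ b, M b →L[R] R) : ContinuousMultilinearMap R M N where
  toMultilinearMap := f.toMultilinearMap.extend hk fun b => φ b
  cont := by
    show Continuous fun x : ∀ b, M b => (∏ b ∈ (univ.image k)ᶜ, φ b (x b)) • f (fun i => x (k i))
    fun_prop

lemma ContinuousMultilinearMap.extend_apply_of_forall_eq_one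
    (f : ContinuousMultilinearMap R (fun i => M (k i)) N) (hk : Injective k)
    {φ : ∀ b, M b →L[R] R} {x : ∀ b, M b} (hx : ∀ b ∈ (univ.image k)ᶜ, φ b (x b) = 1) :
    f.extend hk φ x = f (fun i => x (k i)) := by
  change (∏ b ∈ (univ.image k)ᶜ, φ b (x b)) • f (fun i => x (k i)) = _
  rw [prod_eq_one hx, one_smul]

end Extend

section MixedNorms

variable {𝕂 : Type*} [RCLike 𝕂] {E : Type*} [NormedAddCommGroup E] [NormedSpace 𝕂 E]
  {J J' : Type*} [Fintype J] [Fintype J']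

lemma weakLpNorm_nonneg (q : ℝ) (x : J → E) : 0 ≤ weakLpNorm 𝕂 q x :=
  Real.iSup_nonneg fun _ => by positivity

lemma le_weakLpNorm {q : ℝ} (hq : 0 ≤ q) (x : J → E) (φ : E →L[𝕂] 𝕂) (hφ : ‖φ‖ ≤ 1) :
    (∑ j, ‖φ (x j)‖ ^ q) ^ (1 / q) ≤ weakLpNorm 𝕂 q x := by
  have hbdd : BddAbove (Set.range fun ψ : {ψ : E →L[𝕂] 𝕂 // ‖ψ‖ ≤ 1} =>
      (∑ j, ‖ψ.1 (x j)‖ ^ q) ^ (1 / q)) := by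
    refine ⟨(∑ j, ‖x j‖ ^ q) ^ (1 / q), ?_⟩
    rintro _ ⟨ψ, rfl⟩
    refine Real.rpow_le_rpow (by positivity) (sum_le_sum fun j _ => ?_) (one_div_nonneg.2 hq)
    exact Real.rpow_le_rpow (norm_nonneg _)
      (ψ.1.le_of_opNorm_le ψ.2 _ |>.trans_eq (one_mul _)) hq
  exact le_ciSup hbdd ⟨φ, hφ⟩

lemma weakLpNorm_comp_le {ι : J → J'} (hι : Injective ι) {q : ℝ} (hq : 0 ≤ q) (x : J' → E) :
    weakLpNorm 𝕂 q (x ∘ ι) ≤ weakLpNorm 𝕂 q x :=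
  Real.iSup_le (fun φ => le_trans (Real.rpow_le_rpow (by positivity)
    (sum_comp_le_sum_of_injective hι (fun j => ‖φ.1 (x j)‖ ^ q) fun _ => by positivity)
    (one_div_nonneg.2 hq))
    (le_weakLpNorm hq x φ.1 φ.2)) (weakLpNorm_nonneg q x)

lemma weakLpNorm_single_le [DecidableEq J] {q : ℝ} (hq : 0 < q) (j : J) (a : E) :
    weakLpNorm 𝕂 q (Pi.single j a : J → E) ≤ ‖a‖ := by
  refine Real.iSup_le (fun φ => ?_) (norm_nonneg a)
  have hsum : ∑ l, ‖φ.1 ((Pi.single j a : J → E) l)‖ ^ q = ‖φ.1 a‖ ^ q := by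
    simp [Pi.apply_single (fun _ v => ‖φ.1 v‖ ^ q) (fun _ => by simp [hq.ne']), sum_pi_single']
  rw [hsum, ← Real.rpow_mul (norm_nonneg _), mul_one_div_cancel hq.ne', Real.rpow_one]
  exact φ.1.le_of_opNorm_le φ.2 a |>.trans_eq (one_mul _)

lemma weakLpNorm_of_isEmpty [IsEmpty J] {q : ℝ} (hq : q ≠ 0) (x : J → E) :
    weakLpNorm 𝕂 q x = 0 := by
  simp [weakLpNorm, Real.zero_rpow (inv_ne_zero hq)]

/-- The factor `‖τ‖_{ℓ^ρ}`, `1/ρ = 1/q - 1/s`, in the definition of `mixedNorm`. -/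
def rhoNorm (s q : ℝ) (τ : J → 𝕂) : ℝ :=
  if s = q then ⨆ j, ‖τ j‖ else (∑ j, ‖τ j‖ ^ (1 / q - 1 / s)⁻¹) ^ (1 / q - 1 / s)

lemma rhoNorm_nonneg (s q : ℝ) (τ : J → 𝕂) : 0 ≤ rhoNorm s q τ := by
  unfold rhoNorm
  split_ifs
  exacts [Real.iSup_nonneg fun _ => norm_nonneg _, by positivity]

lemma rhoNorm_comp_le {s q : ℝ} (hq : 0 < q) (hqs : q ≤ s) {ι : J → J'} (hι : Injective ι)
    (τ : J' → 𝕂) : rhoNorm s q (τ ∘ ι) ≤ rhoNorm s q τ := by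
  unfold rhoNorm
  split_ifs
  · exact Real.iSup_le (fun j => le_ciSup (f := fun j => ‖τ j‖) (Set.finite_range _).bddAbove (ι j))
      (Real.iSup_nonneg fun _ => norm_nonneg _)
  · have : 1 / s ≤ 1 / q := one_div_le_one_div_of_le hq hqs
    exact Real.rpow_le_rpow (by positivity)
      (sum_comp_le_sum_of_injective hι (fun j => ‖τ j‖ ^ (1 / q - 1 / s)⁻¹) fun _ => by positivity)
      (by linarith)

variable {F : Type*} [NormedAddCommGroup F] [NormedSpace 𝕂 F]

lemma mixedNorm_nonneg (s q : ℝ) (z : J → F) : 0 ≤ mixedNorm 𝕂 s q z :=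
  Real.sInf_nonneg <| by
    rintro _ ⟨τ, y, -, rfl⟩
    exact mul_nonneg (rhoNorm_nonneg s q τ) (weakLpNorm_nonneg s y)

lemma mixedNorm_le {s q : ℝ} {z : J → F} {τ : J → 𝕂} {y : J → F} (hz : ∀ j, z j = τ j • y j) :
    mixedNorm 𝕂 s q z ≤ rhoNorm s q τ * weakLpNorm 𝕂 s y := by
  refine csInf_le ⟨0, ?_⟩ ⟨τ, y, hz, rfl⟩
  rintro _ ⟨τ', y', -, rfl⟩
  exact mul_nonneg (rhoNorm_nonneg s q τ') (weakLpNorm_nonneg s y')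

lemma mixedNorm_comp_le {s q : ℝ} (hq : 0 < q) (hqs : q ≤ s) {ι : J → J'} (hι : Injective ι)
    (z : J' → F) : mixedNorm 𝕂 s q (z ∘ ι) ≤ mixedNorm 𝕂 s q z := by
  refine le_csInf ⟨_, 1, z, fun j => (one_smul 𝕂 (z j)).symm, rfl⟩ ?_
  rintro _ ⟨τ, y, hz, rfl⟩
  exact (mixedNorm_le fun j => hz (ι j)).trans <|
    mul_le_mul (rhoNorm_comp_le hq hqs hι τ) (weakLpNorm_comp_le hι (hq.le.trans hqs) y)
      (weakLpNorm_nonneg s _) (rhoNorm_nonneg s q τ)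

lemma mixedNorm_of_isEmpty [IsEmpty J] {s : ℝ} (hs : s ≠ 0) (q : ℝ) (z : J → F) :
    mixedNorm 𝕂 s q z = 0 :=
  le_antisymm ((mixedNorm_le (τ := 1) (y := z) fun j => (one_smul 𝕂 (z j)).symm).trans_eq
    (by rw [weakLpNorm_of_isEmpty hs, mul_zero])) (mixedNorm_nonneg s q z)

end MixedNorms

lemma prod_weakLpNorm_extendDep_single_le {𝕂 : Type*} [RCLike 𝕂] {ι κ J : Type*} [Fintype ι]
    [Fintype κ] [DecidableEq κ] [Fintype J] [DecidableEq J] {E : κ → Type*}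
    [∀ b, NormedAddCommGroup (E b)] [∀ b, NormedSpace 𝕂 (E b)] {k : ι → κ} (hk : Injective k)
    {p : κ → ℝ} (hp : ∀ b, 0 < p b) (x : ∀ i, J → E (k i)) (a : ∀ b, E b) (l₀ : J) :
    ∏ b, weakLpNorm 𝕂 (p b) (extendDep k x (fun b => (Pi.single l₀ (a b) : J → E b)) b) ≤
      (∏ i, weakLpNorm 𝕂 (p (k i)) (x i)) * ∏ b ∈ (univ.image k)ᶜ, ‖a b‖ := by
  rw [← prod_comp_mul_prod_compl_image hk]
  simp only [hk.extendDep_apply (β := fun b => J → E b)]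
  gcongr with b hb
  · exact prod_nonneg fun i _ => weakLpNorm_nonneg _ _
  · exact fun b _ => weakLpNorm_nonneg _ _
  · rw [extendDep_apply' _ _ (by simpa using hb)]
    exact weakLpNorm_single_le (hp b) l₀ (a b)

theorem MultipleMixingSumming.of_extend {𝕂 : Type*} [RCLike 𝕂] {n j : ℕ} (hj : 0 < j)
    {k : Fin j → Fin n} (hk : Injective k) {s q : ℝ} (hq : 0 < q) (hqs : q ≤ s)
    {p : Fin n → ℝ} (hp : ∀ b, 0 < p b) {E : Fin n → Type*} [∀ b, NormedAddCommGroup (E b)]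
    [∀ b, NormedSpace 𝕂 (E b)] {F : Type*} [NormedAddCommGroup F] [NormedSpace 𝕂 F]
    (S : ContinuousMultilinearMap 𝕂 (fun i => E (k i)) F) (φ : ∀ b, E b →L[𝕂] 𝕂)
    (a : ∀ b, E b) (ha : ∀ b, φ b (a b) = 1)
    (hT : MultipleMixingSumming 𝕂 s q p (S.extend hk φ)) :
    MultipleMixingSumming 𝕂 s q (fun i => p (k i)) S := by
  classical
  obtain ⟨σ, hσ, hT⟩ := hT
  refine ⟨σ * ∏ b ∈ (univ.image k)ᶜ, ‖a b‖, by positivity, fun m x => ?_⟩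
  rcases isEmpty_or_nonempty (Fin m) with hm | ⟨⟨l₀⟩⟩
  · have : IsEmpty (Fin j → Fin m) := isEmpty_fun.2 ⟨⟨⟨0, hj⟩⟩, hm⟩
    rw [mixedNorm_of_isEmpty (hq.trans_le hqs).ne']
    exact mul_nonneg (by positivity) (prod_nonneg fun i _ => weakLpNorm_nonneg _ _)
  let X : ∀ b, Fin m → E b := extendDep k x fun b => Pi.single l₀ (a b)
  let ι : (Fin j → Fin m) → (Fin n → Fin m) := fun w => extend k w fun _ => l₀
  have hX : ∀ i, X (k i) = x i := hk.extendDep_apply (β := fun b => Fin m → E b) x _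
  have hX_off : ∀ b ∈ (univ.image k)ᶜ, X b = Pi.single l₀ (a b) := fun b hb =>
    extendDep_apply' _ _ (by simpa using hb)
  have hι_off : ∀ b ∈ (univ.image k)ᶜ, ∀ w, ι w b = l₀ := fun b hb w =>
    extend_apply' _ _ _ (by simpa using hb)
  have hι : Injective ι := fun w w' h => funext fun i => by
    simpa [ι, hk.extend_apply] using congr_fun h (k i)
  have hfamily : (fun w : Fin j → Fin m => S fun i => x i (w i)) =
      (fun v : Fin n → Fin m => S.extend hk φ fun b => X b (v b)) ∘ ι := by
    funext w
    have hunit : ∀ b ∈ (univ.image k)ᶜ, φ b (X b (ι w b)) = 1 := fun b hb => by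
      rw [hX_off b hb, hι_off b hb, Pi.single_eq_same, ha]
    rw [comp_apply, S.extend_apply_of_forall_eq_one (M := E) hk hunit]
    simp only [hX, ι, hk.extend_apply]
  calc mixedNorm 𝕂 s q (fun w : Fin j → Fin m => S fun i => x i (w i))
      ≤ mixedNorm 𝕂 s q (fun v : Fin n → Fin m => S.extend hk φ fun b => X b (v b)) :=
        hfamily ▸ mixedNorm_comp_le hq hqs hι _
    _ ≤ σ * ∏ b, weakLpNorm 𝕂 (p b) (X b) := hT m X
    _ ≤ σ * ((∏ i, weakLpNorm 𝕂 (p (k i)) (x i)) * ∏ b ∈ (univ.image k)ᶜ, ‖a b‖) :=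
        mul_le_mul_of_nonneg_left (prod_weakLpNorm_extendDep_single_le hk hp x a l₀) hσ
    _ = _ := by ring

theorem multipleMixingSumming_coincidence_inherit_general
    {𝕂 : Type*} [RCLike 𝕂] {n : ℕ}
    (s q : ℝ) (p : Fin n → ℝ) (hp : ∀ k, 0 < p k) (hpq : ∀ k, p k ≤ q) (hqs : q ≤ s)
    (E : Fin n → Type*) [∀ i, NormedAddCommGroup (E i)] [∀ i, NormedSpace 𝕂 (E i)]
    [∀ i, Nontrivial (E i)]
    (F : Type*) [NormedAddCommGroup F] [NormedSpace 𝕂 F]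
    (h : ∀ T : ContinuousMultilinearMap 𝕂 E F, MultipleMixingSumming 𝕂 s q p (⇑T)) :
    ∀ (j : ℕ), 1 ≤ j → j < n → ∀ (k : Fin j → Fin n), StrictMono k →
      ∀ S : ContinuousMultilinearMap 𝕂 (fun i : Fin j => E (k i)) F,
        MultipleMixingSumming 𝕂 s q (fun i : Fin j => p (k i)) (⇑S) := by
  intro j hj _ k hk S
  have hq : 0 < q := (hp (k ⟨0, hj⟩)).trans_le (hpq _)
  choose a ha using fun b => exists_ne (0 : E b)
  choose φ hφ using fun b => SeparatingDual.exists_eq_one (R := 𝕂) (ha b)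
  exact .of_extend hj hk.injective hq hqs hp S φ a hφ (h _)

/-- coincidence inheritance for multiple mixing summing operators.
If every continuous `n`-linear operator from `E₁ × ⋯ × Eₙ` to `F` is multiple
`(s,q;p₁,…,pₙ)`-mixing summing, then for every strictly increasing choice of `j < n`
indices `k₁ < ⋯ < k_j`, every continuous `j`-linear operator from
`E_{k₁} × ⋯ × E_{k_j}` to `F` is multiple `(s,q;p_{k₁},…,p_{k_j})`-mixing summing. -/
theorem multipleMixingSumming_coincidence_inherit
    {𝕂 : Type*} [RCLike 𝕂] {n : ℕ} (hn : 1 ≤ n)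
    (s q : ℝ) (p : Fin n → ℝ) (hp : ∀ k, 0 < p k) (hpq : ∀ k, p k ≤ q) (hqs : q ≤ s)
    (E : Fin n → Type*) [∀ i, NormedAddCommGroup (E i)] [∀ i, NormedSpace 𝕂 (E i)]
    [∀ i, CompleteSpace (E i)] [∀ i, Nontrivial (E i)]
    (F : Type*) [NormedAddCommGroup F] [NormedSpace 𝕂 F] [CompleteSpace F]
    (h : ∀ T : ContinuousMultilinearMap 𝕂 E F, MultipleMixingSumming 𝕂 s q p (⇑T)) :
    ∀ (j : ℕ), 1 ≤ j → j < n → ∀ (k : Fin j → Fin n), StrictMono k →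
      ∀ S : ContinuousMultilinearMap 𝕂 (fun i : Fin j => E (k i)) F,
        MultipleMixingSumming 𝕂 s q (fun i : Fin j => p (k i)) (⇑S) :=
  multipleMixingSumming_coincidence_inherit_general s q p hp hpq hqs E F h
end
end
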